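/- arXiv:1501.01146 — 2 statements merged into one kernel-verified Lean document; each statement's English description precedes it below -/
import Mathlib

section
/- Let Λ be a pg-Bessel sequence for X₂ with bound B_Λ and Θ a qg-Bessel sequence for X₁^* with bound B_Θ, and fix p₁, q₁ > 1 with 1/p₁ + 1/q₁ = 1. If m, m^(n) ∈ ℓ^∞ with ‖m^(n) − m‖_{p₁} → 0, then ‖M_{m^(n),Λ,Θ} − M_{m,Λ,Θ}‖ → 0 as n → ∞; in fact ‖M_{m^(n),Λ,Θ} − M_{m,Λ,Θ}‖ ≤ B_Λ B_Θ ‖m^(n) − m‖_{p₁}. -/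
open NormedSpace Filter

/-- The Banach-space adjoint (dual map) of a continuous linear map. -/
noncomputable def opAdj {X Y : Type*} [NormedAddCommGroup X] [NormedSpace ℝ X]
    [NormedAddCommGroup Y] [NormedSpace ℝ Y] (T : X →L[ℝ] Y) :
    StrongDual ℝ Y →L[ℝ] StrongDual ℝ X :=
  (ContinuousLinearMap.compL ℝ X Y ℝ).flip T

/-!
Testing `Λᵢ^* Θᵢ g` against `x` gives `(Θᵢ g)(Λᵢ x)`, so by Hölder a finite block of the series
`∑ cᵢ Λᵢ^* Θᵢ g` has norm at most `sup |cᵢ| · B_Λ · (∑_block ‖Θᵢ g‖^q)^{1/q}`. Since `∑ ‖Θᵢ g‖^q`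
converges, the series is Cauchy, and its sum has norm at most `sup |cᵢ| · B_Λ B_Θ ‖g‖`. Applying this
to the symbol `m⁽ⁿ⁾ − m`, whose sup norm is bounded by its `ℓ^{p₁}` norm, gives the estimate.
-/

@[simp]
theorem opAdj_apply {X Y : Type*} [NormedAddCommGroup X] [NormedSpace ℝ X]
    [NormedAddCommGroup Y] [NormedSpace ℝ Y] (T : X →L[ℝ] Y) (φ : StrongDual ℝ Y) (x : X) :
    opAdj T φ x = φ (T x) :=
  rfl

theorem rpow_sum_le_rpow_tsum {ι : Type*} {f : ι → ℝ} (hf : ∀ i, 0 ≤ f i) (hs : Summable f)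
    (t : Finset ι) {r : ℝ} (hr : 0 ≤ r) :
    (∑ i ∈ t, f i) ^ r ≤ (∑' i, f i) ^ r :=
  Real.rpow_le_rpow (Finset.sum_nonneg fun i _ => hf i) (hs.sum_le_tsum t fun i _ => hf i) hr

theorem abs_le_tsum_abs_rpow_one_div {ι : Type*} {a : ι → ℝ} {p : ℝ} (hp : 0 < p)
    (hs : Summable fun i => |a i| ^ p) (i : ι) :
    |a i| ≤ (∑' j, |a j| ^ p) ^ (1 / p) := by
  calc |a i| = (|a i| ^ p) ^ (1 / p) := by
        rw [one_div, Real.rpow_rpow_inv (abs_nonneg _) hp.ne']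
    _ ≤ (∑' j, |a j| ^ p) ^ (1 / p) :=
        Real.rpow_le_rpow (by positivity)
          (hs.le_tsum i fun j _ => Real.rpow_nonneg (abs_nonneg _) _) (by positivity)

theorem summable_and_norm_tsum_le_of_norm_sum_le {ι E : Type*} [NormedAddCommGroup E]
    [CompleteSpace E] {f : ι → E} {a : ι → ℝ} {C r : ℝ} (hC : 0 ≤ C) (hr : 0 < r)
    (ha : ∀ i, 0 ≤ a i) (has : Summable a)
    (hf : ∀ t : Finset ι, ‖∑ i ∈ t, f i‖ ≤ C * (∑ i ∈ t, a i) ^ r) :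
    Summable f ∧ ‖∑' i, f i‖ ≤ C * (∑' i, a i) ^ r := by
  have hsum : Summable f := by
    refine summable_iff_vanishing_norm.2 fun ε hε => ?_
    set δ := (ε / (C + 1)) ^ (1 / r)
    have hδ : 0 < δ := by positivity
    obtain ⟨s, hs⟩ := summable_iff_vanishing_norm.1 has δ hδ
    refine ⟨s, fun t ht => ?_⟩
    have hat : 0 ≤ ∑ i ∈ t, a i := Finset.sum_nonneg fun i _ => ha i
    have hsmall : ∑ i ∈ t, a i < δ := by simpa [abs_of_nonneg hat] using hs t ht
    calc ‖∑ i ∈ t, f i‖ ≤ C * (∑ i ∈ t, a i) ^ r := hf t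
      _ ≤ C * δ ^ r := by gcongr
      _ = C * (ε / (C + 1)) := by
          rw [← Real.rpow_mul (by positivity), one_div_mul_cancel hr.ne', Real.rpow_one]
      _ < ε := by
          rw [mul_div_assoc', div_lt_iff₀ (by positivity)]
          nlinarith
  refine ⟨hsum, le_of_tendsto hsum.hasSum.norm (Eventually.of_forall fun t => ?_)⟩
  exact (hf t).trans (mul_le_mul_of_nonneg_left (rpow_sum_le_rpow_tsum ha has t hr.le) hC)

section Multiplier

variable {X₁ X₂ : Type*} [NormedAddCommGroup X₁] [NormedSpace ℝ X₁]
    [NormedAddCommGroup X₂] [NormedSpace ℝ X₂]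
    {Y : ℕ → Type*} [∀ i, NormedAddCommGroup (Y i)] [∀ i, NormedSpace ℝ (Y i)]
    {p q : ℝ} (hpq : p.HolderConjugate q)
    (Λ : ∀ i, X₂ →L[ℝ] Y i) (Θ : ∀ i, StrongDual ℝ X₁ →L[ℝ] StrongDual ℝ (Y i))
    {BΛ : ℝ} (hBΛ : 0 ≤ BΛ)
    (hΛ : ∀ x : X₂, Summable (fun i => ‖Λ i x‖ ^ p) ∧
      (∑' i, ‖Λ i x‖ ^ p) ^ (1 / p) ≤ BΛ * ‖x‖)
    (g : StrongDual ℝ X₁) {c : ℕ → ℝ} {M : ℝ} (hM : ∀ i, |c i| ≤ M)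
include hpq hBΛ hΛ hM

theorem norm_sum_smul_opAdj_le (t : Finset ℕ) :
    ‖∑ i ∈ t, c i • opAdj (Λ i) (Θ i g)‖ ≤ M * BΛ * (∑ i ∈ t, ‖Θ i g‖ ^ q) ^ (1 / q) := by
  have hM0 : 0 ≤ M := (abs_nonneg _).trans (hM 0)
  refine ContinuousLinearMap.opNorm_le_bound _ (by positivity) fun x => ?_
  have hΛx : (∑ i ∈ t, ‖Λ i x‖ ^ p) ^ (1 / p) ≤ BΛ * ‖x‖ :=
    (rpow_sum_le_rpow_tsum (fun _ => by positivity) (hΛ x).1 t (one_div_pos.2 hpq.pos).le).trans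
      (hΛ x).2
  calc ‖(∑ i ∈ t, c i • opAdj (Λ i) (Θ i g)) x‖
      = ‖∑ i ∈ t, c i * Θ i g (Λ i x)‖ := by
        simp only [sum_apply, smul_apply, opAdj_apply, smul_eq_mul]
    _ ≤ ∑ i ∈ t, M * (‖Λ i x‖ * ‖Θ i g‖) := by
        refine (norm_sum_le _ _).trans (Finset.sum_le_sum fun i _ => ?_)
        rw [norm_mul, Real.norm_eq_abs, mul_comm ‖Λ i x‖]
        exact mul_le_mul (hM i) ((Θ i g).le_opNorm _) (norm_nonneg _) hM0
    _ ≤ M * ((∑ i ∈ t, ‖Λ i x‖ ^ p) ^ (1 / p) * (∑ i ∈ t, ‖Θ i g‖ ^ q) ^ (1 / q)) := by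
        rw [← Finset.mul_sum]
        exact mul_le_mul_of_nonneg_left (Real.inner_le_Lp_mul_Lq_of_nonneg t hpq
          (fun i _ => norm_nonneg _) (fun i _ => norm_nonneg _)) hM0
    _ ≤ M * (BΛ * ‖x‖ * (∑ i ∈ t, ‖Θ i g‖ ^ q) ^ (1 / q)) := by gcongr
    _ = M * BΛ * (∑ i ∈ t, ‖Θ i g‖ ^ q) ^ (1 / q) * ‖x‖ := by ring

theorem summable_smul_opAdj_and_norm_tsum_le {BΘ : ℝ}
    (hΘg : Summable (fun i => ‖Θ i g‖ ^ q) ∧ (∑' i, ‖Θ i g‖ ^ q) ^ (1 / q) ≤ BΘ * ‖g‖) :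
    Summable (fun i => c i • opAdj (Λ i) (Θ i g)) ∧
      ‖∑' i, c i • opAdj (Λ i) (Θ i g)‖ ≤ M * BΛ * BΘ * ‖g‖ := by
  have hM0 : 0 ≤ M := (abs_nonneg _).trans (hM 0)
  obtain ⟨hsum, hnorm⟩ := summable_and_norm_tsum_le_of_norm_sum_le (by positivity)
    (one_div_pos.2 hpq.symm.pos) (fun i => by positivity) hΘg.1
    (norm_sum_smul_opAdj_le hpq Λ Θ hBΛ hΛ g hM)
  refine ⟨hsum, hnorm.trans ?_⟩
  rw [mul_assoc _ BΘ]
  exact mul_le_mul_of_nonneg_left hΘg.2 (by positivity)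

end Multiplier

theorem multiplier_continuous_in_symbol_general
    {X₁ X₂ : Type*} [NormedAddCommGroup X₁] [NormedSpace ℝ X₁]
    [NormedAddCommGroup X₂] [NormedSpace ℝ X₂]
    {Y : ℕ → Type*} [∀ i, NormedAddCommGroup (Y i)] [∀ i, NormedSpace ℝ (Y i)]
    (p q : ℝ) (hp : 1 < p) (hpq : 1 / p + 1 / q = 1)
    (p₁ : ℝ) (hp₁ : 1 < p₁)
    (Λ : ∀ i, X₂ →L[ℝ] Y i) (Θ : ∀ i, StrongDual ℝ X₁ →L[ℝ] StrongDual ℝ (Y i))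
    (BΛ BΘ : ℝ) (hBΛ : 0 < BΛ)
    (hΛ : ∀ x : X₂, Summable (fun i => ‖Λ i x‖ ^ p) ∧
      (∑' i, ‖Λ i x‖ ^ p) ^ (1 / p) ≤ BΛ * ‖x‖)
    (hΘ : ∀ g : StrongDual ℝ X₁, Summable (fun i => ‖Θ i g‖ ^ q) ∧
      (∑' i, ‖Θ i g‖ ^ q) ^ (1 / q) ≤ BΘ * ‖g‖)
    (m : ℕ → ℝ) (mn : ℕ → ℕ → ℝ)
    (hm : ∃ M, ∀ i, |m i| ≤ M)
    (hdiffsum : ∀ n, Summable (fun i => |mn n i - m i| ^ p₁))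
    (hconv : Tendsto (fun n => (∑' i, |mn n i - m i| ^ p₁) ^ (1 / p₁))
      atTop (nhds 0)) :
    -- the explicit bound `‖M_{m⁽ⁿ⁾,Λ,Θ} − M_{m,Λ,Θ}‖ ≤ B_Λ B_Θ ‖m⁽ⁿ⁾ − m‖_{p₁}`
    (∀ (n : ℕ) (g : StrongDual ℝ X₁),
      Summable (fun i => mn n i • opAdj (Λ i) (Θ i g)) ∧
      Summable (fun i => m i • opAdj (Λ i) (Θ i g)) ∧
      ‖(∑' i, mn n i • opAdj (Λ i) (Θ i g)) - ∑' i, m i • opAdj (Λ i) (Θ i g)‖ ≤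
        BΛ * BΘ * (∑' i, |mn n i - m i| ^ p₁) ^ (1 / p₁) * ‖g‖) ∧
    -- hence `‖M_{m⁽ⁿ⁾,Λ,Θ} − M_{m,Λ,Θ}‖ → 0`
    (∃ C : ℕ → ℝ, Tendsto C atTop (nhds 0) ∧
      ∀ (n : ℕ) (g : StrongDual ℝ X₁),
        ‖(∑' i, mn n i • opAdj (Λ i) (Θ i g)) - ∑' i, m i • opAdj (Λ i) (Θ i g)‖ ≤
          C n * ‖g‖) := by
  have hpq' : p.HolderConjugate q :=
    Real.holderConjugate_iff.2 ⟨hp, by simpa only [one_div] using hpq⟩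
  set D : ℕ → ℝ := fun n => (∑' i, |mn n i - m i| ^ p₁) ^ (1 / p₁)
  obtain ⟨M, hM⟩ := hm
  have bound : ∀ n g,
      Summable (fun i => mn n i • opAdj (Λ i) (Θ i g)) ∧
      Summable (fun i => m i • opAdj (Λ i) (Θ i g)) ∧
      ‖(∑' i, mn n i • opAdj (Λ i) (Θ i g)) - ∑' i, m i • opAdj (Λ i) (Θ i g)‖ ≤
        BΛ * BΘ * D n * ‖g‖ := by
    intro n g
    obtain ⟨hsm, -⟩ := summable_smul_opAdj_and_norm_tsum_le hpq' Λ Θ hBΛ.le hΛ g hM (hΘ g)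
    obtain ⟨hsdiff, hdiff⟩ := summable_smul_opAdj_and_norm_tsum_le hpq' Λ Θ hBΛ.le hΛ g
      (abs_le_tsum_abs_rpow_one_div (by linarith) (hdiffsum n)) (hΘ g)
    have hsmn : Summable (fun i => mn n i • opAdj (Λ i) (Θ i g)) := by
      simpa only [← add_smul, add_sub_cancel] using hsm.add hsdiff
    refine ⟨hsmn, hsm, ?_⟩
    rw [← hsmn.tsum_sub hsm]
    calc _ = ‖∑' i, (mn n i - m i) • opAdj (Λ i) (Θ i g)‖ :=
          congrArg norm (tsum_congr fun i => (sub_smul _ _ _).symm)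
      _ ≤ D n * BΛ * BΘ * ‖g‖ := hdiff
      _ = BΛ * BΘ * D n * ‖g‖ := by ring
  refine ⟨bound, fun n => BΛ * BΘ * D n, ?_, fun n g => (bound n g).2.2⟩
  simpa only [mul_zero] using hconv.const_mul (BΛ * BΘ)

/-- if `‖m⁽ⁿ⁾ − m‖_{p₁} → 0` then
`‖M_{m⁽ⁿ⁾,Λ,Θ} − M_{m,Λ,Θ}‖ ≤ B_Λ B_Θ ‖m⁽ⁿ⁾ − m‖_{p₁} → 0`. -/
theorem multiplier_continuous_in_symbol
    {X₁ X₂ : Type*} [NormedAddCommGroup X₁] [NormedSpace ℝ X₁] [CompleteSpace X₁]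
    [NormedAddCommGroup X₂] [NormedSpace ℝ X₂] [CompleteSpace X₂]
    {Y : ℕ → Type*} [∀ i, NormedAddCommGroup (Y i)] [∀ i, NormedSpace ℝ (Y i)]
    [∀ i, CompleteSpace (Y i)]
    (hreflX₁ : Function.Surjective (inclusionInDoubleDual ℝ X₁))
    (hreflX₂ : Function.Surjective (inclusionInDoubleDual ℝ X₂))
    (hreflY : ∀ i, Function.Surjective (inclusionInDoubleDual ℝ (Y i)))
    (p q : ℝ) (hp : 1 < p) (hpq : 1 / p + 1 / q = 1)
    (p₁ q₁ : ℝ) (hp₁ : 1 < p₁) (hpq₁ : 1 / p₁ + 1 / q₁ = 1)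
    (Λ : ∀ i, X₂ →L[ℝ] Y i) (Θ : ∀ i, StrongDual ℝ X₁ →L[ℝ] StrongDual ℝ (Y i))
    (BΛ BΘ : ℝ) (hBΛ : 0 < BΛ) (hBΘ : 0 < BΘ)
    (hΛ : ∀ x : X₂, Summable (fun i => ‖Λ i x‖ ^ p) ∧
      (∑' i, ‖Λ i x‖ ^ p) ^ (1 / p) ≤ BΛ * ‖x‖)
    (hΘ : ∀ g : StrongDual ℝ X₁, Summable (fun i => ‖Θ i g‖ ^ q) ∧
      (∑' i, ‖Θ i g‖ ^ q) ^ (1 / q) ≤ BΘ * ‖g‖)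
    (m : ℕ → ℝ) (mn : ℕ → ℕ → ℝ)
    (hm : ∃ M, ∀ i, |m i| ≤ M) (hmn : ∀ n, ∃ M, ∀ i, |mn n i| ≤ M)
    (hdiffsum : ∀ n, Summable (fun i => |mn n i - m i| ^ p₁))
    (hconv : Tendsto (fun n => (∑' i, |mn n i - m i| ^ p₁) ^ (1 / p₁))
      atTop (nhds 0)) :
    -- the explicit bound `‖M_{m⁽ⁿ⁾,Λ,Θ} − M_{m,Λ,Θ}‖ ≤ B_Λ B_Θ ‖m⁽ⁿ⁾ − m‖_{p₁}`
    (∀ (n : ℕ) (g : StrongDual ℝ X₁),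
      Summable (fun i => mn n i • opAdj (Λ i) (Θ i g)) ∧
      Summable (fun i => m i • opAdj (Λ i) (Θ i g)) ∧
      ‖(∑' i, mn n i • opAdj (Λ i) (Θ i g)) - ∑' i, m i • opAdj (Λ i) (Θ i g)‖ ≤
        BΛ * BΘ * (∑' i, |mn n i - m i| ^ p₁) ^ (1 / p₁) * ‖g‖) ∧
    -- hence `‖M_{m⁽ⁿ⁾,Λ,Θ} − M_{m,Λ,Θ}‖ → 0`
    (∃ C : ℕ → ℝ, Tendsto C atTop (nhds 0) ∧
      ∀ (n : ℕ) (g : StrongDual ℝ X₁),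
        ‖(∑' i, mn n i • opAdj (Λ i) (Θ i g)) - ∑' i, m i • opAdj (Λ i) (Θ i g)‖ ≤
          C n * ‖g‖) :=
  multiplier_continuous_in_symbol_general p q hp hpq p₁ hp₁ Λ Θ BΛ BΘ hBΛ hΛ hΘ m mn hm hdiffsum
    hconv
end

section
/- If Λ = {Λ_i ∈ B(X, Y_i)} satisfies the qg-Riesz basis finite-sum condition (ii), then Σ_i Λ_i^* g_i converges unconditionally in X^* for every {g_i} ∈ (Σ_i ⊕ Y_i^*)_{ℓ^q}, and A(Σ_i ‖g_i‖^q)^{1/q} ≤ ‖Σ_i Λ_i^* g_i‖ ≤ B(Σ_i ‖g_i‖^q)^{1/q} holds for the full (infinite) sums. -/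
open NormedSpace Filter

theorem summable_of_norm_sum_le_comp {ι E : Type*} [NormedAddCommGroup E] [CompleteSpace E]
    {f : ι → E} {u : ι → ℝ} (hu : Summable u) {φ : ℝ → ℝ} (hφ : Tendsto φ (nhds 0) (nhds 0))
    (hbound : ∀ s : Finset ι, ‖∑ i ∈ s, f i‖ ≤ φ (∑ i ∈ s, u i)) : Summable f := by
  refine summable_iff_vanishing_norm.2 fun ε hε => ?_
  obtain ⟨δ, hδ, hφε⟩ := Metric.tendsto_nhds_nhds.1 hφ ε hε
  obtain ⟨s, hs⟩ := summable_iff_vanishing_norm.1 hu δ hδ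
  refine ⟨s, fun t hts => ?_⟩
  have hφt : |φ (∑ i ∈ t, u i)| < ε := by
    simpa only [Real.dist_eq, sub_zero, Real.norm_eq_abs] using hφε (by simpa using hs t hts)
  exact (hbound t).trans_lt (lt_of_abs_lt hφt)

theorem tendsto_const_mul_rpow_nhds_zero (B : ℝ) {p : ℝ} (hp : 0 < p) :
    Tendsto (fun x : ℝ => B * x ^ p) (nhds 0) (nhds 0) := by
  have h := ((tendsto_id (x := nhds (0 : ℝ))).rpow_const (Or.inr hp.le)).const_mul B
  simpa only [id, Real.zero_rpow hp.ne', mul_zero] using h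

theorem qgRiesz_condition_infinite_sums_general
    {X : Type*} [NormedAddCommGroup X] [NormedSpace ℝ X]
    {Y : ℕ → Type*} [∀ i, NormedAddCommGroup (Y i)] [∀ i, NormedSpace ℝ (Y i)]
    (q : ℝ) (hq : 1 < q)
    (Λ : ∀ i, X →L[ℝ] Y i) (A B : ℝ)
    (hriesz : ∀ (s : Finset ℕ) (g : ∀ i, StrongDual ℝ (Y i)),
      A * (∑ i ∈ s, ‖g i‖ ^ q) ^ (1 / q) ≤ ‖∑ i ∈ s, opAdj (Λ i) (g i)‖ ∧
      ‖∑ i ∈ s, opAdj (Λ i) (g i)‖ ≤ B * (∑ i ∈ s, ‖g i‖ ^ q) ^ (1 / q)) :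
    ∀ g : ∀ i, StrongDual ℝ (Y i), Summable (fun i => ‖g i‖ ^ q) →
      Summable (fun i => opAdj (Λ i) (g i)) ∧
      A * (∑' i, ‖g i‖ ^ q) ^ (1 / q) ≤ ‖∑' i, opAdj (Λ i) (g i)‖ ∧
      ‖∑' i, opAdj (Λ i) (g i)‖ ≤ B * (∑' i, ‖g i‖ ^ q) ^ (1 / q) := by
  intro g hg
  have hexp : 0 < 1 / q := by have := zero_lt_one.trans hq; positivity
  have hsum : Summable fun i => opAdj (Λ i) (g i) :=
    summable_of_norm_sum_le_comp hg (tendsto_const_mul_rpow_nhds_zero B hexp)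
      fun s => (hriesz s g).2
  have hlhs := hsum.hasSum.norm
  have hrhs := hg.hasSum.rpow_const (Or.inr hexp.le)
  exact ⟨hsum,
    le_of_tendsto_of_tendsto' (hrhs.const_mul A) hlhs fun s => (hriesz s g).1,
    le_of_tendsto_of_tendsto' hlhs (hrhs.const_mul B) fun s => (hriesz s g).2⟩

/-- if `Λ` satisfies the qg-Riesz finite-sum condition (ii), then for
every `{gᵢ} ∈ (Σᵢ ⊕ Yᵢ*)_{ℓᑫ}` the series `Σᵢ Λᵢ* gᵢ` converges unconditionally
(is summable) in `X*` and the two-sided inequality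
`A (Σᵢ‖gᵢ‖^q)^{1/q} ≤ ‖Σᵢ Λᵢ* gᵢ‖ ≤ B (Σᵢ‖gᵢ‖^q)^{1/q}` holds for the full sums. -/
theorem qgRiesz_condition_infinite_sums
    {X : Type*} [NormedAddCommGroup X] [NormedSpace ℝ X] [CompleteSpace X]
    {Y : ℕ → Type*} [∀ i, NormedAddCommGroup (Y i)] [∀ i, NormedSpace ℝ (Y i)]
    [∀ i, CompleteSpace (Y i)]
    (q : ℝ) (hq : 1 < q)
    (Λ : ∀ i, X →L[ℝ] Y i) (A B : ℝ) (hA : 0 < A) (hB : 0 < B)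
    (hriesz : ∀ (s : Finset ℕ) (g : ∀ i, StrongDual ℝ (Y i)),
      A * (∑ i ∈ s, ‖g i‖ ^ q) ^ (1 / q) ≤ ‖∑ i ∈ s, opAdj (Λ i) (g i)‖ ∧
      ‖∑ i ∈ s, opAdj (Λ i) (g i)‖ ≤ B * (∑ i ∈ s, ‖g i‖ ^ q) ^ (1 / q)) :
    ∀ g : ∀ i, StrongDual ℝ (Y i), Summable (fun i => ‖g i‖ ^ q) →
      Summable (fun i => opAdj (Λ i) (g i)) ∧
      A * (∑' i, ‖g i‖ ^ q) ^ (1 / q) ≤ ‖∑' i, opAdj (Λ i) (g i)‖ ∧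
      ‖∑' i, opAdj (Λ i) (g i)‖ ≤ B * (∑' i, ‖g i‖ ^ q) ^ (1 / q) :=
  qgRiesz_condition_infinite_sums_general q hq Λ A B hriesz
end
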